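/- arXiv:2506.09998 — 2 statements merged into one kernel-verified Lean document; each statement's English description precedes it below -/
import Mathlib

section
/- (Half-biased acceptance probability bound.) Let P = Bern(p), Q = Bern(q) with q ∈ (0,1), M = max{p/q,(1-p)/(1-q)}, A(x) = P(x)/(MQ(x)). Let x* ∈ {0,1} satisfy A(x*) = 1 and let x̂ be the other point with A(x̂) < 1. Assume Ã(x*) = 1, Ã(x̂) = A(x̂) + e with |e| ≤ c, 0 ≤ Ã(x̂) ≤ 1, and Q(x̂)·M·c < 1. Then for P̃(x) = Q(x)Ã(x)/α̃ with α̃ = Σ_x Q(x)Ã(x), the total variation distance satisfies TV(P̃, P) ≤ Q(x̂)·M·c / (1 − Q(x̂)·M·c). -/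
lemma key_lemma (s h M e c A αt : ℝ)
    (hs0 : 0 ≤ s) (hh0 : 0 ≤ h) (hM : 0 < M)
    (hsum : M * s + M * h * A = 1) (hPs1 : M * s ≤ 1)
    (he : |e| ≤ c) (hsmall : h * M * c < 1)
    (hαt : αt = s * 1 + h * (A + e)) :
    (1 / 2) * (|s * 1 / αt - M * s| + |h * (A + e) / αt - M * (h * A)|)
      ≤ h * M * c / (1 - h * M * c) := by
  have hc0 : 0 ≤ c := le_trans (abs_nonneg e) he
  have hD : 0 < 1 - h * M * c := by linarith
  have hMαt : M * αt = 1 + M * (h * e) := by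
    rw [hαt]; linear_combination hsum
  have he' : -c ≤ e := neg_le_of_abs_le he
  have hprod : 0 ≤ M * h * (e + c) :=
    mul_nonneg (mul_nonneg hM.le hh0) (by linarith)
  have hMαt_lb : 1 - h * M * c ≤ M * αt := by nlinarith
  have hαt_pos : 0 < αt := by nlinarith
  have hαt_ne : αt ≠ 0 := ne_of_gt hαt_pos
  have hT1 : s * 1 / αt - M * s = -(M * s * (h * e)) / αt := by
    rw [eq_comm, div_eq_iff hαt_ne, sub_mul, div_mul_cancel₀ _ hαt_ne]
    linear_combination s * hMαt
  have hT2 : h * (A + e) / αt - M * (h * A) = (M * s * (h * e)) / αt := by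
    rw [eq_comm, div_eq_iff hαt_ne, sub_mul, div_mul_cancel₀ _ hαt_ne]
    linear_combination (h * e) * hsum + (h * A) * hMαt
  rw [hT1, hT2, abs_div, abs_div, abs_neg, abs_of_pos hαt_pos]
  have habs : |M * s * (h * e)| = M * s * (h * |e|) := by
    rw [abs_mul, abs_mul, abs_mul, abs_of_nonneg hM.le, abs_of_nonneg hs0,
      abs_of_nonneg hh0]
  rw [habs]
  have key : M * s * (h * |e|) / αt ≤ h * M * c / (1 - h * M * c) := by
    rw [div_le_div_iff₀ hαt_pos hD]
    have h1 : M * s * (h * |e|) ≤ h * c := by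
      have hhe : h * |e| ≤ h * c := mul_le_mul_of_nonneg_left he hh0
      have h0 : 0 ≤ h * |e| := mul_nonneg hh0 (abs_nonneg e)
      nlinarith
    have t1 : M * s * (h * |e|) * (1 - h * M * c) ≤ h * c * (1 - h * M * c) :=
      mul_le_mul_of_nonneg_right h1 hD.le
    have t2 : h * c * (1 - h * M * c) ≤ h * c * (M * αt) :=
      mul_le_mul_of_nonneg_left hMαt_lb (mul_nonneg hh0 hc0)
    nlinarith
  linarith

/-- Half-biased acceptance bound: TV(P̃,P) ≤ Q(x̂)Mc/(1 − Q(x̂)Mc). -/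
theorem half_biased_bound (p q c e M αt : ℝ) (P Q A At : Bool → ℝ)
    (hp0 : 0 ≤ p) (hp1 : p ≤ 1) (hq0 : 0 < q) (hq1 : q < 1)
    (hP : P = fun x => if x then p else 1 - p)
    (hQ : Q = fun x => if x then q else 1 - q)
    (hM : M = max (p / q) ((1 - p) / (1 - q)))
    (hA : A = fun x => P x / (M * Q x))
    (xstar xhat : Bool) (hne : xstar ≠ xhat)
    (hAstar : A xstar = 1) (hAhat : A xhat < 1)
    (hAtstar : At xstar = 1) (hAthat : At xhat = A xhat + e)
    (he : |e| ≤ c) (hb0 : 0 ≤ At xhat) (hb1 : At xhat ≤ 1)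
    (hsmall : Q xhat * M * c < 1)
    (hαt : αt = Q true * At true + Q false * At false) :
    (1 / 2) * (|Q true * At true / αt - P true| + |Q false * At false / αt - P false|)
      ≤ Q xhat * M * c / (1 - Q xhat * M * c) := by
  have hq1' : 0 < 1 - q := by linarith
  have hM1 : 1 ≤ M := by
    rw [hM]
    by_contra hlt
    push_neg at hlt
    rw [max_lt_iff, div_lt_one hq0, div_lt_one hq1'] at hlt
    linarith [hlt.1, hlt.2]
  have hM0 : 0 < M := by linarith
  have hPt : P true = p := by simp [hP]
  have hPf : P false = 1 - p := by simp [hP]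
  have hQt : Q true = q := by simp [hQ]
  have hQf : Q false = 1 - q := by simp [hQ]
  cases xstar <;> cases xhat
  · exact absurd rfl hne
  · -- xstar = false, xhat = true : s = 1-q, h = q, Ps = 1-p
    have hAt : A true = p / (M * q) := by rw [hA]; simp only []; rw [hPt, hQt]
    have hAf : A false = (1 - p) / (M * (1 - q)) := by rw [hA]; simp only []; rw [hPf, hQf]
    have hp_eq : 1 - p = M * (1 - q) := by
      rw [hAf] at hAstar
      field_simp at hAstar
      linarith
    have hsum : M * (1 - q) + M * q * A true = 1 := by
      rw [hAt]
      field_simp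
      linarith
    have h1p : p = M * (q * A true) := by
      linear_combination (-1) * hsum - hp_eq
    have key := key_lemma (1 - q) q M e c (A true) αt hq1'.le hq0.le hM0 hsum
      (by linarith) he (by rw [hQt] at hsmall; linarith) ?_
    · rw [hQt, hQf, hPt, hPf] at *
      rw [hAtstar, hAthat, hp_eq, h1p]
      linarith [key]
    · rw [hαt, hQt, hQf, hAtstar, hAthat]; ring
  · -- xstar = true, xhat = false : s = q, h = 1-q, Ps = p
    have hAt : A true = p / (M * q) := by rw [hA]; simp only []; rw [hPt, hQt]
    have hAf : A false = (1 - p) / (M * (1 - q)) := by rw [hA]; simp only []; rw [hPf, hQf]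
    have hp_eq : p = M * q := by
      rw [hAt] at hAstar
      field_simp at hAstar
      linarith
    have hsum : M * q + M * (1 - q) * A false = 1 := by
      rw [hAf]
      field_simp
      linarith
    have h1p : 1 - p = M * ((1 - q) * A false) := by
      linear_combination (-1) * hsum - hp_eq
    have key := key_lemma q (1 - q) M e c (A false) αt hq0.le hq1'.le hM0 hsum
      (by linarith) he (by rw [hQf] at hsmall; linarith) ?_
    · rw [hQt, hQf, hPt, hPf] at *
      rw [hAtstar, hAthat, h1p, hp_eq]
      linarith [key]
    · rw [hαt, hQt, hQf, hAtstar, hAthat]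
  · exact absurd rfl hne
end

section
/- In the half-biased setting, the two error terms are equal in magnitude: |P̃(x*) − P(x*)| = |P̃(x̂) − P(x̂)| = Q(x*)·Q(x̂)·|e| / (α·α̃), where α = 1/M and α̃ = α + Q(x̂)e. -/
/-!
Write `Ps, Ph, Qs, Qh` for the masses of `x*, x̂`. Since `A(x*) = 1`, the point `x*` carries the
envelope, `Ps = M Qs = Qs / α`, and `Qh A(x̂) = α Ph`. Perturbing the acceptance probability at `x̂`
by `e` moves the total acceptance from `α` to `α̃ = α + Qh e`; hence
`P̃(x*) - Ps = Qs/α̃ - Qs/α = -Qs Qh e / (α α̃)`, and since the errors of two distributions on a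
two-point space cancel, `P̃(x̂) - Ph = Qs Qh e / (α α̃)`.
-/

def bernoulliMass (p : ℝ) (x : Bool) : ℝ := if x then p else 1 - p

lemma bernoulliMass_add_of_ne (p : ℝ) {x y : Bool} (h : x ≠ y) :
    bernoulliMass p x + bernoulliMass p y = 1 := by
  cases x <;> cases y <;> simp_all [bernoulliMass]

lemma bernoulliMass_pos {q : ℝ} (hq0 : 0 < q) (hq1 : q < 1) (x : Bool) :
    0 < bernoulliMass q x := by
  cases x <;> simp only [bernoulliMass, Bool.false_eq_true, if_true, if_false] <;> linarith

lemma one_le_max_div_div {p q : ℝ} (hq0 : 0 < q) (hq1 : q < 1) :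
    1 ≤ max (p / q) ((1 - p) / (1 - q)) := by
  set M := max (p / q) ((1 - p) / (1 - q))
  have hp : p ≤ M * q := (div_le_iff₀ hq0).mp (le_max_left _ _)
  have hp' : 1 - p ≤ M * (1 - q) := (div_le_iff₀ (sub_pos.mpr hq1)).mp (le_max_right _ _)
  nlinarith

section TwoPointErrors

variable {Ps Ph Qs Qh α αt e : ℝ}

lemma accepted_error_eq (hα : α ≠ 0) (hαt : αt ≠ 0) (hPs : Ps = Qs / α)
    (hαt_def : αt = α + Qh * e) :
    Qs / αt - Ps = -(Qs * Qh * e / (α * αt)) := by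
  subst hPs
  field_simp
  rw [hαt_def]
  ring

lemma rejected_error_eq (hα : α ≠ 0) (hαt : αt ≠ 0) (hsum : Ps + Ph = 1) (hPs : Ps = Qs / α)
    {Ah : ℝ} (hAh : Qh * Ah = α * Ph) (hαt_def : αt = α + Qh * e) :
    Qh * (Ah + e) / αt - Ph = Qs * Qh * e / (α * αt) := by
  have hQs : Qs = α * (1 - Ph) := by
    rw [← eq_sub_of_add_eq hsum, hPs]
    field_simp
  rw [hQs]
  field_simp
  rw [hαt_def]
  linear_combination hAh

lemma abs_mul_mul_div_of_pos (hQs : 0 < Qs) (hQh : 0 < Qh) (hα : 0 < α) (hαt : 0 < αt) :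
    |Qs * Qh * e / (α * αt)| = Qs * Qh * |e| / (α * αt) := by
  rw [abs_div, abs_mul, abs_mul, abs_of_pos hQs, abs_of_pos hQh, abs_of_pos (mul_pos hα hαt)]

end TwoPointErrors

theorem half_biased_error_symmetry_general (p q e M α αt : ℝ) (P Q A At : Bool → ℝ)
    (hq0 : 0 < q) (hq1 : q < 1)
    (hP : P = fun x => if x then p else 1 - p)
    (hQ : Q = fun x => if x then q else 1 - q)
    (hM : M = max (p / q) ((1 - p) / (1 - q)))
    (hA : A = fun x => P x / (M * Q x))
    (xstar xhat : Bool) (hne : xstar ≠ xhat)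
    (hAstar : A xstar = 1)
    (hAtstar : At xstar = 1) (hAthat : At xhat = A xhat + e)
    (hα : α = 1 / M) (hαt : αt = α + Q xhat * e) (hαtpos : 0 < αt) :
    |Q xstar * At xstar / αt - P xstar| = Q xstar * Q xhat * |e| / (α * αt) ∧
    |Q xhat * At xhat / αt - P xhat| = Q xstar * Q xhat * |e| / (α * αt) := by
  have hMpos : 0 < M := hM ▸ one_pos.trans_le (one_le_max_div_div hq0 hq1)
  have hαpos : 0 < α := hα ▸ one_div_pos.mpr hMpos
  have hQpos : ∀ x, 0 < Q x := hQ ▸ bernoulliMass_pos hq0 hq1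
  have hsum : P xstar + P xhat = 1 := hP ▸ bernoulliMass_add_of_ne p hne
  have hPstar : P xstar = Q xstar / α := by
    rw [hA, div_eq_one_iff_eq (mul_pos hMpos (hQpos xstar)).ne'] at hAstar
    rw [hAstar, hα]
    field_simp
  have hAhat : Q xhat * A xhat = α * P xhat := by
    rw [hA, hα]
    field_simp [(hQpos xhat).ne']
  rw [hAtstar, hAthat, mul_one, accepted_error_eq hαpos.ne' hαtpos.ne' hPstar hαt, abs_neg,
    rejected_error_eq hαpos.ne' hαtpos.ne' hsum hPstar hAhat hαt,
    abs_mul_mul_div_of_pos (hQpos xstar) (hQpos xhat) hαpos hαtpos]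
  exact ⟨rfl, rfl⟩

/-- In the half-biased setting the two pointwise errors agree:
|P̃(x*)−P(x*)| = |P̃(x̂)−P(x̂)| = Q(x*)Q(x̂)|e|/(αα̃). -/
theorem half_biased_error_symmetry (p q e M α αt : ℝ) (P Q A At : Bool → ℝ)
    (hp0 : 0 ≤ p) (hp1 : p ≤ 1) (hq0 : 0 < q) (hq1 : q < 1) (hpq : p ≠ q)
    (hP : P = fun x => if x then p else 1 - p)
    (hQ : Q = fun x => if x then q else 1 - q)
    (hM : M = max (p / q) ((1 - p) / (1 - q)))
    (hA : A = fun x => P x / (M * Q x))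
    (xstar xhat : Bool) (hne : xstar ≠ xhat)
    (hAstar : A xstar = 1) (hAhat : A xhat < 1)
    (hAtstar : At xstar = 1) (hAthat : At xhat = A xhat + e)
    (hα : α = 1 / M) (hαt : αt = α + Q xhat * e) (hαtpos : 0 < αt) :
    |Q xstar * At xstar / αt - P xstar| = Q xstar * Q xhat * |e| / (α * αt) ∧
    |Q xhat * At xhat / αt - P xhat| = Q xstar * Q xhat * |e| / (α * αt) :=
  half_biased_error_symmetry_general p q e M α αt P Q A At hq0 hq1 hP hQ hM hA xstar xhat hne hAstar
    hAtstar hAthat hα hαt hαtpos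
end
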